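/- Let f, g : Ω → [0,1] be measurable with g ≤ f pointwise, let Ψ : Ω → ℝ be square-integrable, and set p_K = E[f], p_∞ = E[g], assuming p_∞ > 0. Then |E[Ψ g]/p_∞ − E[Ψ f]/p_K| ≤ √(E[Ψ²]) · ( (p_K − p_∞)/(p_K √p_∞) + √(p_K − p_∞)/p_K ). -/

import Mathlib

/-!
With `A = E[Ψ g]`, `B = E[Ψ f]`, `p = E[g]`, `q = E[f]`, split
`A/p - B/q = (A/√p) · (q - p)/(q √p) - (B - A)/q`. Cauchy–Schwarz bounds `|A|` by `√E[Ψ²] √E[g²]`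
and `|B - A| = |E[Ψ (f - g)]|` by `√E[Ψ²] √E[(f - g)²]`, and `E[h²] ≤ E[h]` for `0 ≤ h ≤ 1`.
-/

open MeasureTheory ProbabilityTheory Real

section

variable {α : Type*} [MeasurableSpace α] {μ : Measure α}

theorem abs_integral_mul_le_sqrt_integral_sq_mul_sqrt_integral_sq {f g : α → ℝ}
    (hf : MemLp f 2 μ) (hg : MemLp g 2 μ) :
    |∫ a, f a * g a ∂μ| ≤ √(∫ a, f a ^ 2 ∂μ) * √(∫ a, g a ^ 2 ∂μ) := by
  have hholder := integral_mul_norm_le_Lp_mul_Lq (μ := μ) Real.HolderConjugate.two_two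
    (by simpa using hf) (by simpa using hg)
  simp only [Real.norm_eq_abs, Real.rpow_two, sq_abs, ← Real.sqrt_eq_rpow] at hholder
  calc |∫ a, f a * g a ∂μ| ≤ ∫ a, |f a * g a| ∂μ := abs_integral_le_integral_abs
    _ ≤ √(∫ a, f a ^ 2 ∂μ) * √(∫ a, g a ^ 2 ∂μ) := by simpa only [abs_mul] using hholder

theorem abs_integral_mul_le_sqrt_integral_sq_mul_sqrt_integral [IsFiniteMeasure μ] {Ψ h : α → ℝ}
    (hΨ : MemLp Ψ 2 μ) (hh : AEStronglyMeasurable h μ) (h0 : ∀ a, 0 ≤ h a) (h1 : ∀ a, h a ≤ 1) :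
    |∫ a, Ψ a * h a ∂μ| ≤ √(∫ a, Ψ a ^ 2 ∂μ) * √(∫ a, h a ∂μ) := by
  have hh2 : MemLp h 2 μ :=
    MemLp.of_bound hh 1 (ae_of_all _ fun a => by rw [Real.norm_of_nonneg (h0 a)]; exact h1 a)
  have hsq_le : ∫ a, h a ^ 2 ∂μ ≤ ∫ a, h a ∂μ :=
    integral_mono hh2.integrable_sq (hh2.integrable one_le_two) fun a => by
      nlinarith [h0 a, h1 a]
  grw [abs_integral_mul_le_sqrt_integral_sq_mul_sqrt_integral_sq hΨ hh2, hsq_le]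

end

theorem abs_div_sub_div_le {A B p q S : ℝ} (hp : 0 < p) (hpq : p ≤ q) (hA : |A| ≤ S * √p)
    (hBA : |B - A| ≤ S * √(q - p)) :
    |A / p - B / q| ≤ S * ((q - p) / (q * √p) + √(q - p) / q) := by
  have hq : 0 < q := hp.trans_le hpq
  have hsqrt_p : 0 < √p := Real.sqrt_pos.2 hp
  have hsplit : A / p - B / q = A / √p * ((q - p) / (q * √p)) - (B - A) / q := by
    field_simp
    rw [Real.sq_sqrt hp.le]
    ring
  have hA' : |A / √p| ≤ S := by rwa [abs_div, abs_of_pos hsqrt_p, div_le_iff₀ hsqrt_p]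
  have hBA' : |(B - A) / q| ≤ S * √(q - p) / q := by
    rw [abs_div, abs_of_pos hq]
    gcongr
  have hfactor : 0 ≤ (q - p) / (q * √p) := div_nonneg (sub_nonneg.2 hpq) (by positivity)
  calc |A / p - B / q| ≤ |A / √p * ((q - p) / (q * √p))| + |(B - A) / q| := by
        rw [hsplit]
        exact abs_sub _ _
    _ ≤ S * ((q - p) / (q * √p)) + S * √(q - p) / q := by
        rw [abs_mul, abs_of_nonneg hfactor]
        exact add_le_add (mul_le_mul_of_nonneg_right hA' hfactor) hBA'
    _ = S * ((q - p) / (q * √p) + √(q - p) / q) := by ring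

theorem stmt_3_general {Ω : Type*} [MeasureSpace Ω] [IsProbabilityMeasure (ℙ : Measure Ω)]
    (f g Ψ : Ω → ℝ) (hf : Measurable f) (hg : Measurable g)
    (hΨL2 : MemLp Ψ 2 (ℙ : Measure Ω))
    (h0g : ∀ ω, 0 ≤ g ω) (hgf : ∀ ω, g ω ≤ f ω) (hf1 : ∀ ω, f ω ≤ 1)
    (hpinf : 0 < ∫ ω, g ω) :
    |(∫ ω, Ψ ω * g ω) / (∫ ω, g ω) - (∫ ω, Ψ ω * f ω) / (∫ ω, f ω)| ≤
      Real.sqrt (∫ ω, (Ψ ω) ^ 2) *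
        (((∫ ω, f ω) - (∫ ω, g ω)) / ((∫ ω, f ω) * Real.sqrt (∫ ω, g ω))
          + Real.sqrt ((∫ ω, f ω) - (∫ ω, g ω)) / (∫ ω, f ω)) := by
  have hg1 (ω : Ω) : g ω ≤ 1 := (hgf ω).trans (hf1 ω)
  have hf_norm (ω : Ω) : ‖f ω‖ ≤ 1 := by
    rw [Real.norm_of_nonneg ((h0g ω).trans (hgf ω))]
    exact hf1 ω
  have hg_norm (ω : Ω) : ‖g ω‖ ≤ 1 := by
    rw [Real.norm_of_nonneg (h0g ω)]
    exact hg1 ω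
  have hfint : Integrable f := .of_bound hf.aestronglyMeasurable 1 (ae_of_all _ hf_norm)
  have hgint : Integrable g := .of_bound hg.aestronglyMeasurable 1 (ae_of_all _ hg_norm)
  have hΨint : Integrable Ψ := hΨL2.integrable one_le_two
  have hΨg := abs_integral_mul_le_sqrt_integral_sq_mul_sqrt_integral hΨL2
    hg.aestronglyMeasurable h0g hg1
  have hΨf_sub_Ψg : |(∫ ω, Ψ ω * f ω) - ∫ ω, Ψ ω * g ω|
      ≤ √(∫ ω, Ψ ω ^ 2) * √((∫ ω, f ω) - ∫ ω, g ω) := by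
    rw [← integral_sub hfint hgint,
      ← integral_sub (hΨint.mul_bdd hf.aestronglyMeasurable (ae_of_all _ hf_norm))
        (hΨint.mul_bdd hg.aestronglyMeasurable (ae_of_all _ hg_norm))]
    simpa only [mul_sub] using abs_integral_mul_le_sqrt_integral_sq_mul_sqrt_integral
      (h := fun ω => f ω - g ω) hΨL2 (hf.sub hg).aestronglyMeasurable
      (fun ω => sub_nonneg.2 (hgf ω)) (fun ω => by linarith [h0g ω, hf1 ω])
  exact abs_div_sub_div_le hpinf (integral_mono hgint hfint hgf) hΨg hΨf_sub_Ψg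

/-- **Abstract truncation error bound (Proposition `controlerreur`, part a).**
If `0 ≤ g ≤ f ≤ 1`, `Ψ` is square integrable, `p_K = E[f]`, `p_∞ = E[g] > 0`, then
`|E[Ψ g]/p_∞ − E[Ψ f]/p_K| ≤ √(E[Ψ²]) ((p_K − p_∞)/(p_K √p_∞) + √(p_K − p_∞)/p_K)`. -/
theorem stmt_3 {Ω : Type*} [MeasureSpace Ω] [IsProbabilityMeasure (ℙ : Measure Ω)]
    (f g Ψ : Ω → ℝ) (hf : Measurable f) (hg : Measurable g)
    (hΨmeas : Measurable Ψ) (hΨL2 : MemLp Ψ 2 (ℙ : Measure Ω))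
    (h0g : ∀ ω, 0 ≤ g ω) (hgf : ∀ ω, g ω ≤ f ω) (hf1 : ∀ ω, f ω ≤ 1)
    (hpinf : 0 < ∫ ω, g ω) :
    |(∫ ω, Ψ ω * g ω) / (∫ ω, g ω) - (∫ ω, Ψ ω * f ω) / (∫ ω, f ω)| ≤
      Real.sqrt (∫ ω, (Ψ ω) ^ 2) *
        (((∫ ω, f ω) - (∫ ω, g ω)) / ((∫ ω, f ω) * Real.sqrt (∫ ω, g ω))
          + Real.sqrt ((∫ ω, f ω) - (∫ ω, g ω)) / (∫ ω, f ω)) :=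
  stmt_3_general f g Ψ hf hg hΨL2 h0g hgf hf1 hpinf
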